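/- Let V be a steplike potential with steps V₊, V₋ and threshold x_M. Let z ∈ ℝ with z > V₊ and z > V₋, and set r₊ = √(z − V₊) > 0 and r₋ = √(z − V₋) > 0. Suppose u and v are solutions of −u'' + V u = z u, and there are constants T₋, R₋, T₊, R₊ ∈ ℂ with: u(x) = T₋ e^{−i r₋ x} for all x ≤ −x_M and u(x) = e^{−i r₊ x} + R₋ e^{i r₊ x} for all x ≥ x_M; v(x) = e^{i r₋ x} + R₊ e^{−i r₋ x} for all x ≤ −x_M and v(x) = T₊ e^{i r₊ x} for all x ≥ x_M. Then conj(T₋) · R₊ + conj(R₋) · T₋ = 0, where conj denotes complex conjugation. -/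

import Mathlib

/-! The Wronskian `W(f, g) = f g' - f' g` of two solutions of `-u'' + V u = z u` is constant, and
for real `V` and `z` the conjugate of a solution is again a solution. Where a solution is a plane
wave `A e^{ikx} + B e^{-ikx}` the Wronskian is explicit, so comparing `W(u, v)` and `W(conj u, v)`
at the two ends gives `r₊ T₊ = r₋ T₋` and `r₊ conj(R₋) T₊ = -r₋ conj(T₋) R₊`, which combine to the
claim. -/

open Complex MeasureTheory
open scoped Classical

/-- `u` is a solution of `-u'' + V u = z u`: `u` is differentiable with continuous
derivative, and the derivative satisfies the integrated form of the ODE. -/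
def IsSolution (V : ℝ → ℝ) (z : ℂ) (u : ℝ → ℂ) : Prop :=
  Differentiable ℝ u ∧ Continuous (deriv u) ∧
    ∀ x : ℝ, deriv u x = deriv u 0 + ∫ t in (0:ℝ)..x, ((V t : ℂ) - z) * u t

open Set Filter Topology

theorem absolutelyContinuousOnInterval_integral_of_norm_le {E : Type*} [NormedAddCommGroup E]
    [NormedSpace ℝ E] {h : ℝ → E} (hh : LocallyIntegrable h volume) {a b M : ℝ}
    (hM : ∀ t ∈ uIcc a b, ‖h t‖ ≤ M) (c : ℝ) :
    AbsolutelyContinuousOnInterval (fun x => ∫ t in c..x, h t) a b := by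
  refine LipschitzOnWith.absolutelyContinuousOnInterval (K := M.toNNReal) ?_
  refine LipschitzOnWith.of_dist_le_mul fun x hx y hy => ?_
  have hint : ∀ p q : ℝ, IntervalIntegrable h volume p q := fun p q =>
    (hh.integrableOn_isCompact isCompact_uIcc).intervalIntegrable
  rw [dist_eq_norm, intervalIntegral.integral_interval_sub_left (hint c x) (hint c y),
    Real.dist_eq]
  calc ‖∫ t in y..x, h t‖ ≤ M * |x - y| :=
        intervalIntegral.norm_integral_le_of_norm_le_const fun t ht =>
          hM t (uIcc_subset_uIcc hy hx (uIoc_subset_uIcc ht))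
    _ ≤ M.toNNReal * |x - y| := by gcongr; exact Real.le_coe_toNNReal M

noncomputable def wronskian (f g : ℝ → ℂ) (x : ℝ) : ℂ := f x * deriv g x - deriv f x * g x

theorem norm_ofReal_sub_le_of_abs_le {r C : ℝ} (h : |r| ≤ C) (z : ℂ) : ‖(r : ℂ) - z‖ ≤ C + ‖z‖ :=
  (norm_sub_le _ _).trans (by rw [norm_real, Real.norm_eq_abs]; gcongr)

namespace IsSolution

variable {V : ℝ → ℝ} {z : ℂ} {u v : ℝ → ℂ}

theorem hasDerivAt (hu : IsSolution V z u) (x : ℝ) : HasDerivAt u (deriv u x) x :=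
  (hu.1 x).hasDerivAt

theorem deriv_eq_add_integral (hu : IsSolution V z u) :
    deriv u = fun x => deriv u 0 + ∫ t in (0:ℝ)..x, ((V t : ℂ) - z) * u t :=
  funext hu.2.2

theorem locallyIntegrable_potential_mul (hV : Measurable V) (hVb : ∃ C, ∀ x, |V x| ≤ C)
    (hu : IsSolution V z u) : LocallyIntegrable (fun t => ((V t : ℂ) - z) * u t) volume := by
  obtain ⟨C, hC⟩ := hVb
  have hmem : MemLp (fun t => (V t : ℂ) - z) ⊤ volume :=
    memLp_top_of_bound ((measurable_ofReal.comp hV).sub_const z).aestronglyMeasurable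
      (C + ‖z‖) (Eventually.of_forall fun t => norm_ofReal_sub_le_of_abs_le (hC t) z)
  have hloc := hmem.locallyIntegrable le_top
  rw [← locallyIntegrableOn_univ] at hloc ⊢
  exact hloc.mul_continuousOn hu.1.continuous.continuousOn isClosed_univ.isLocallyClosed

theorem ae_hasDerivAt_deriv (hV : Measurable V) (hVb : ∃ C, ∀ x, |V x| ≤ C)
    (hu : IsSolution V z u) : ∀ᵐ x, HasDerivAt (deriv u) (((V x : ℂ) - z) * u x) x := by
  filter_upwards [LocallyIntegrable.ae_hasDerivAt_integral
    (hu.locallyIntegrable_potential_mul hV hVb)] with x hx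
  rw [hu.deriv_eq_add_integral]
  exact (hx 0).const_add _

theorem absolutelyContinuousOnInterval_deriv (hV : Measurable V) (hVb : ∃ C, ∀ x, |V x| ≤ C)
    (hu : IsSolution V z u) (a b : ℝ) : AbsolutelyContinuousOnInterval (deriv u) a b := by
  obtain ⟨C, hC⟩ := hVb
  obtain ⟨B, hB⟩ := isCompact_uIcc.exists_bound_of_continuousOn
    (hu.1.continuous.continuousOn (s := uIcc a b))
  have hbound : ∀ t ∈ uIcc a b, ‖((V t : ℂ) - z) * u t‖ ≤ (C + ‖z‖) * B := fun t ht => by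
    rw [norm_mul]
    exact mul_le_mul (norm_ofReal_sub_le_of_abs_le (hC t) z) (hB t ht) (norm_nonneg _)
      ((norm_nonneg _).trans (norm_ofReal_sub_le_of_abs_le (hC t) z))
  rw [hu.deriv_eq_add_integral]
  exact contDiffOn_const.absolutelyContinuousOnInterval.add
    (absolutelyContinuousOnInterval_integral_of_norm_le
      (hu.locallyIntegrable_potential_mul hV ⟨C, hC⟩) hbound 0)

theorem absolutelyContinuousOnInterval (hu : IsSolution V z u) (a b : ℝ) :
    AbsolutelyContinuousOnInterval u a b :=
  (contDiff_one_iff_deriv.2 ⟨hu.1, hu.2.1⟩).contDiffOn.absolutelyContinuousOnInterval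

/- The derivative of a solution is only absolutely continuous, so the Wronskian has derivative `0`
only almost everywhere; being itself absolutely continuous, it is nevertheless constant. -/
theorem wronskian_eq (hV : Measurable V) (hVb : ∃ C, ∀ x, |V x| ≤ C)
    (hu : IsSolution V z u) (hv : IsSolution V z v) (a b : ℝ) :
    wronskian u v a = wronskian u v b := by
  have hac : AbsolutelyContinuousOnInterval (wronskian u v) a b := by
    have huv := (hu.absolutelyContinuousOnInterval a b).fun_smul
      (hv.absolutelyContinuousOnInterval_deriv hV hVb a b)
    have hvu := (hu.absolutelyContinuousOnInterval_deriv hV hVb a b).fun_smul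
      (hv.absolutelyContinuousOnInterval a b)
    exact huv.fun_sub hvu
  have hderiv : ∀ᵐ x, x ∈ uIcc a b → HasDerivAt (wronskian u v) 0 x := by
    filter_upwards [hu.ae_hasDerivAt_deriv hV hVb, hv.ae_hasDerivAt_deriv hV hVb]
      with x hu' hv' _
    exact (((hu.hasDerivAt x).mul hv').sub (hu'.mul (hv.hasDerivAt x))).congr_deriv (by ring)
  obtain ⟨C, hC⟩ := hac.const_of_ae_hasDerivAt_zero hderiv
  rw [hC a left_mem_uIcc, hC b right_mem_uIcc]

theorem conj {z : ℝ} (hu : IsSolution V z u) :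
    IsSolution V z (fun x => starRingEnd ℂ (u x)) := by
  have hderiv : deriv (fun x => starRingEnd ℂ (u x)) = fun x => starRingEnd ℂ (deriv u x) :=
    funext fun x => ((hu.hasDerivAt x).star).deriv
  refine ⟨fun x => (hu.hasDerivAt x).star.differentiableAt, ?_, fun x => ?_⟩
  · rw [hderiv]
    exact continuous_conj.comp hu.2.1
  · simp only [hderiv, hu.2.2 x, map_add, ← intervalIntegral.intervalIntegral_conj, map_mul,
      map_sub, conj_ofReal]

end IsSolution

noncomputable def planeWave (k : ℝ) (A B : ℂ) (x : ℝ) : ℂ :=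
  A * exp (I * k * x) + B * exp (-(I * k * x))

theorem hasDerivAt_planeWave (k : ℝ) (A B : ℂ) (x : ℝ) :
    HasDerivAt (planeWave k A B)
      (I * k * (A * exp (I * k * x) - B * exp (-(I * k * x)))) x := by
  have hlin : HasDerivAt (fun y : ℝ => I * k * y) (I * k) x := by
    simpa using (hasDerivAt_id (x : ℝ)).ofReal_comp.const_mul (I * k)
  have hneg : HasDerivAt (fun y : ℝ => -(I * k * y)) (-(I * k)) x := hlin.neg
  exact ((hlin.cexp.const_mul A).add (hneg.cexp.const_mul B)).congr_deriv (by ring)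

theorem conj_planeWave (k : ℝ) (A B : ℂ) (x : ℝ) :
    starRingEnd ℂ (planeWave k A B x) = planeWave k (starRingEnd ℂ B) (starRingEnd ℂ A) x := by
  simp only [planeWave, map_add, map_mul, ← exp_conj, map_neg, conj_I, conj_ofReal]
  ring_nf

theorem wronskian_eq_of_eventuallyEq_planeWave {f g : ℝ → ℂ} {k : ℝ} {A B C D : ℂ} {x : ℝ}
    (hf : f =ᶠ[𝓝 x] planeWave k A B) (hg : g =ᶠ[𝓝 x] planeWave k C D) :
    wronskian f g x = 2 * I * k * (B * C - A * D) := by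
  have hexp : exp (I * k * x) * exp (-(I * k * x)) = 1 := by
    rw [← exp_add, add_neg_cancel, exp_zero]
  rw [wronskian, hf.eq_of_nhds, hg.eq_of_nhds, hf.deriv_eq, hg.deriv_eq,
    (hasDerivAt_planeWave k A B x).deriv, (hasDerivAt_planeWave k C D x).deriv, planeWave,
    planeWave]
  linear_combination 2 * I * k * (B * C - A * D) * hexp

theorem conjugate_orthogonality_relation_general
    (V : ℝ → ℝ) (Vm xM : ℝ)
    (hVmeas : Measurable V) (hVbdd : ∃ C : ℝ, ∀ x : ℝ, |V x| ≤ C)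
    (z : ℝ) (hzm : Vm < z)
    (rp rm : ℝ) (hrm : rm = Real.sqrt (z - Vm))
    (u v : ℝ → ℂ) (hu : IsSolution V (z : ℂ) u) (hv : IsSolution V (z : ℂ) v)
    (Tm Rm Tp Rp : ℂ)
    (huL : ∀ x : ℝ, x ≤ -xM → u x = Tm * Complex.exp (-(Complex.I * (rm : ℂ) * x)))
    (huR : ∀ x : ℝ, xM ≤ x →
      u x = Complex.exp (-(Complex.I * (rp : ℂ) * x)) + Rm * Complex.exp (Complex.I * (rp : ℂ) * x))
    (hvL : ∀ x : ℝ, x ≤ -xM →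
      v x = Complex.exp (Complex.I * (rm : ℂ) * x) + Rp * Complex.exp (-(Complex.I * (rm : ℂ) * x)))
    (hvR : ∀ x : ℝ, xM ≤ x → v x = Tp * Complex.exp (Complex.I * (rp : ℂ) * x)) :
    (starRingEnd ℂ) Tm * Rp + (starRingEnd ℂ) Rm * Tm = 0 := by
  set a := -xM - 1
  set b := xM + 1
  have hleft : ∀ᶠ x in 𝓝 a, x ≤ -xM := eventually_le_nhds (by linarith)
  have hright : ∀ᶠ x in 𝓝 b, xM ≤ x := eventually_ge_nhds (by linarith)
  have uL : u =ᶠ[𝓝 a] planeWave rm 0 Tm :=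
    hleft.mono fun x hx => by rw [huL x hx, planeWave]; ring
  have uR : u =ᶠ[𝓝 b] planeWave rp Rm 1 :=
    hright.mono fun x hx => by rw [huR x hx, planeWave]; ring
  have vL : v =ᶠ[𝓝 a] planeWave rm 1 Rp :=
    hleft.mono fun x hx => by rw [hvL x hx, planeWave]; ring
  have vR : v =ᶠ[𝓝 b] planeWave rp Tp 0 :=
    hright.mono fun x hx => by rw [hvR x hx, planeWave]; ring
  have conj_uL : (fun x => starRingEnd ℂ (u x)) =ᶠ[𝓝 a] planeWave rm (starRingEnd ℂ Tm) 0 :=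
    uL.mono fun x hx => by dsimp only; rw [hx, conj_planeWave, map_zero]
  have conj_uR : (fun x => starRingEnd ℂ (u x)) =ᶠ[𝓝 b] planeWave rp 1 (starRingEnd ℂ Rm) :=
    uR.mono fun x hx => by dsimp only; rw [hx, conj_planeWave, map_one]
  have hW := hu.wronskian_eq hVmeas hVbdd hv a b
  have hWconj := hu.conj.wronskian_eq hVmeas hVbdd hv a b
  rw [wronskian_eq_of_eventuallyEq_planeWave uL vL,
    wronskian_eq_of_eventuallyEq_planeWave uR vR] at hW
  rw [wronskian_eq_of_eventuallyEq_planeWave conj_uL vL,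
    wronskian_eq_of_eventuallyEq_planeWave conj_uR vR] at hWconj
  have hrm0 : 2 * I * rm ≠ 0 := by
    have : (rm : ℂ) ≠ 0 := ofReal_ne_zero.2 (hrm ▸ (Real.sqrt_pos.2 (by linarith)).ne')
    simp [this, I_ne_zero]
  refine mul_left_cancel₀ hrm0 ?_
  linear_combination -hWconj + starRingEnd ℂ Rm * hW

theorem conjugate_orthogonality_relation
    (V : ℝ → ℝ) (Vp Vm xM : ℝ)
    (hVmeas : Measurable V) (hVbdd : ∃ C : ℝ, ∀ x : ℝ, |V x| ≤ C)
    (hxM : 0 < xM)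
    (hVp : ∀ x : ℝ, xM < x → V x = Vp)
    (hVm : ∀ x : ℝ, x < -xM → V x = Vm)
    (z : ℝ) (hzp : Vp < z) (hzm : Vm < z)
    (rp rm : ℝ) (hrp : rp = Real.sqrt (z - Vp)) (hrm : rm = Real.sqrt (z - Vm))
    (u v : ℝ → ℂ) (hu : IsSolution V (z : ℂ) u) (hv : IsSolution V (z : ℂ) v)
    (Tm Rm Tp Rp : ℂ)
    (huL : ∀ x : ℝ, x ≤ -xM → u x = Tm * Complex.exp (-(Complex.I * (rm : ℂ) * x)))
    (huR : ∀ x : ℝ, xM ≤ x →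
      u x = Complex.exp (-(Complex.I * (rp : ℂ) * x)) + Rm * Complex.exp (Complex.I * (rp : ℂ) * x))
    (hvL : ∀ x : ℝ, x ≤ -xM →
      v x = Complex.exp (Complex.I * (rm : ℂ) * x) + Rp * Complex.exp (-(Complex.I * (rm : ℂ) * x)))
    (hvR : ∀ x : ℝ, xM ≤ x → v x = Tp * Complex.exp (Complex.I * (rp : ℂ) * x)) :
    (starRingEnd ℂ) Tm * Rp + (starRingEnd ℂ) Rm * Tm = 0 :=
  conjugate_orthogonality_relation_general V Vm xM hVmeas hVbdd z hzm rp rm hrm u v hu hv Tm Rm Tp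
    Rp huL huR hvL hvR
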